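/- arXiv:2208.07826 — 9 statements merged into one kernel-verified Lean document; each statement's English description precedes it below -/
import Mathlib

section
/- Let Λ = (λ₀, λ₁) be a family of sets with an inequality over a set with an inequality (I, =_I, ≠_I). Assume that ≠_I is an apartness relation (symmetric and cotransitive), that (I, =_I, ≠_I) is discrete (for all i, j: i =_I j or i ≠_I j), and that for every i ∈ I the inequality ≠_{λ₀(i)} is an apartness relation. Then the inequality of the Sigma-set of Λ is an apartness relation: it never holds together with the Sigma-equality, it is symmetric, and it is cotransitive. -/
/-!
Everything is reduced to a single fibre by transport. Strong extensionality of the transport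
maps together with `λ_{ij} ∘ λ_{ki} = λ_{kj}` lets an inequality in the fibre over `j` be pulled
back to the fibre over `i`; this gives symmetry. For cotransitivity of `(i, x) ≠ (j, y)` with
`i = j` at a third point `(k, z)`, discreteness of `I` decides between `k ≠ i`, which is
already an answer, and `k = i`, where cotransitivity in the fibre over `j` at `λ_{kj}(z)`
finishes the proof.
-/

structure IsApartness {α : Type*} (eq ne : α → α → Prop) : Prop where
  disjoint : ∀ x y, eq x y → ne x y → False
  symm : ∀ x y, ne x y → ne y x
  cotrans : ∀ x y, ne x y → ∀ z, ne z x ∨ ne z y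

namespace IsApartness

variable {α : Type*} {eq ne : α → α → Prop}

theorem ne_of_eq_of_ne (h : IsApartness eq ne) {x x' y : α} (hx : eq x' x) (hne : ne x y) :
    ne x' y :=
  (h.cotrans x y hne x').resolve_left (h.disjoint x' x hx)

end IsApartness

section SigmaSet

variable {I : Type*} {eqI : I → I → Prop} {lam : I → Type*}

def sigmaEq (eqI : I → I → Prop) (eqL : ∀ i, lam i → lam i → Prop)
    (tr : ∀ i j, eqI i j → lam i → lam j) (p q : Σ i, lam i) : Prop :=
  ∃ h : eqI p.1 q.1, eqL q.1 (tr p.1 q.1 h p.2) q.2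

def sigmaNe (eqI neqI : I → I → Prop) (neqL : ∀ i, lam i → lam i → Prop)
    (tr : ∀ i j, eqI i j → lam i → lam j) (p q : Σ i, lam i) : Prop :=
  neqI p.1 q.1 ∨ ∃ h : eqI p.1 q.1, neqL q.1 (tr p.1 q.1 h p.2) q.2

variable {eqL neqL : ∀ i, lam i → lam i → Prop} {tr : ∀ i j, eqI i j → lam i → lam j}

theorem ne_tr_of_ne_tr_tr (hL : ∀ i, IsApartness (eqL i) (neqL i))
    (tr_se : ∀ i j (h : eqI i j) (x x' : lam i),
      neqL j (tr i j h x) (tr i j h x') → neqL i x x')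
    (tr_comp : ∀ i j k (hij : eqI i j) (hjk : eqI j k) (hik : eqI i k) (x : lam i),
      eqL k (tr j k hjk (tr i j hij x)) (tr i k hik x))
    {i j k : I} (hij : eqI i j) (hki : eqI k i) (hkj : eqI k j) (x : lam i) (z : lam k)
    (hne : neqL j (tr k j hkj z) (tr i j hij x)) :
    neqL i (tr k i hki z) x :=
  tr_se i j hij _ _ ((hL j).ne_of_eq_of_ne (tr_comp k i j hki hij hkj z) hne)

theorem sigmaNe_disjoint (hI : IsApartness eqI neqI) (hL : ∀ i, IsApartness (eqL i) (neqL i))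
    (p q : Σ i, lam i) :
    sigmaEq eqI eqL tr p q → sigmaNe eqI neqI neqL tr p q → False := by
  rintro ⟨h, heq⟩ (hne | ⟨_, hne⟩)
  · exact hI.disjoint _ _ h hne
  · exact (hL q.1).disjoint _ _ heq hne

theorem sigmaNe_symm (hI : IsApartness eqI neqI) (eqI_equiv : Equivalence eqI)
    (hL : ∀ i, IsApartness (eqL i) (neqL i))
    (tr_se : ∀ i j (h : eqI i j) (x x' : lam i),
      neqL j (tr i j h x) (tr i j h x') → neqL i x x')
    (tr_id : ∀ i (h : eqI i i) (x : lam i), eqL i (tr i i h x) x)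
    (tr_comp : ∀ i j k (hij : eqI i j) (hjk : eqI j k) (hik : eqI i k) (x : lam i),
      eqL k (tr j k hjk (tr i j hij x)) (tr i k hik x))
    (p q : Σ i, lam i) :
    sigmaNe eqI neqI neqL tr p q → sigmaNe eqI neqI neqL tr q p := by
  obtain ⟨i, x⟩ := p
  obtain ⟨j, y⟩ := q
  rintro (hne | ⟨hij, hne⟩)
  · exact Or.inl (hI.symm i j hne)
  · have hjj := eqI_equiv.refl j
    have hne' : neqL j (tr j j hjj y) (tr i j hij x) :=
      (hL j).ne_of_eq_of_ne (tr_id j hjj y) ((hL j).symm _ _ hne)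
    exact Or.inr ⟨eqI_equiv.symm hij,
      ne_tr_of_ne_tr_tr hL tr_se tr_comp hij (eqI_equiv.symm hij) hjj x y hne'⟩

theorem sigmaNe_cotrans (hI : IsApartness eqI neqI) (eqI_equiv : Equivalence eqI)
    (discI : ∀ i j, eqI i j ∨ neqI i j) (hL : ∀ i, IsApartness (eqL i) (neqL i))
    (tr_se : ∀ i j (h : eqI i j) (x x' : lam i),
      neqL j (tr i j h x) (tr i j h x') → neqL i x x')
    (tr_comp : ∀ i j k (hij : eqI i j) (hjk : eqI j k) (hik : eqI i k) (x : lam i),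
      eqL k (tr j k hjk (tr i j hij x)) (tr i k hik x))
    (p q : Σ i, lam i) : sigmaNe eqI neqI neqL tr p q →
      ∀ r, sigmaNe eqI neqI neqL tr r p ∨ sigmaNe eqI neqI neqL tr r q := by
  obtain ⟨i, x⟩ := p
  obtain ⟨j, y⟩ := q
  rintro (hne | ⟨hij, hne⟩) ⟨k, z⟩
  · exact (hI.cotrans i j hne k).imp Or.inl Or.inl
  · rcases discI k i with hki | hki
    · have hkj := eqI_equiv.trans hki hij
      rcases (hL j).cotrans _ _ hne (tr k j hkj z) with hzx | hzy
      · exact Or.inl (Or.inr ⟨hki, ne_tr_of_ne_tr_tr hL tr_se tr_comp hij hki hkj x z hzx⟩)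
      · exact Or.inr (Or.inr ⟨hkj, hzy⟩)
    · exact Or.inl (Or.inl hki)

end SigmaSet

theorem sigmaSet_apartness_general {I : Type*} (eqI neqI : I → I → Prop)
    (eqI_equiv : Equivalence eqI)
    (neqI_ineq1 : ∀ i j, eqI i j → neqI i j → False)
    (neqI_symm : ∀ i j, neqI i j → neqI j i)
    (neqI_cotrans : ∀ i j, neqI i j → ∀ k, neqI k i ∨ neqI k j)
    (discI : ∀ i j, eqI i j ∨ neqI i j)
    (lam : I → Type*)
    (eqL neqL : ∀ i, lam i → lam i → Prop)
    (neqL_ineq1 : ∀ i (x y : lam i), eqL i x y → neqL i x y → False)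
    (neqL_symm : ∀ i (x y : lam i), neqL i x y → neqL i y x)
    (neqL_cotrans : ∀ i (x y : lam i), neqL i x y → ∀ z, neqL i z x ∨ neqL i z y)
    (tr : ∀ i j, eqI i j → lam i → lam j)
    (tr_se : ∀ i j (h : eqI i j) (x x' : lam i),
      neqL j (tr i j h x) (tr i j h x') → neqL i x x')
    (tr_id : ∀ i (h : eqI i i) (x : lam i), eqL i (tr i i h x) x)
    (tr_comp : ∀ i j k (hij : eqI i j) (hjk : eqI j k) (hik : eqI i k) (x : lam i),
      eqL k (tr j k hjk (tr i j hij x)) (tr i k hik x)) :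
    -- the Sigma-inequality never holds together with the Sigma-equality
    (∀ p q : Σ i, lam i,
      (∃ h : eqI p.1 q.1, eqL q.1 (tr p.1 q.1 h p.2) q.2) →
      (neqI p.1 q.1 ∨ ∃ h : eqI p.1 q.1, neqL q.1 (tr p.1 q.1 h p.2) q.2) → False) ∧
    -- the Sigma-inequality is symmetric
    (∀ p q : Σ i, lam i,
      (neqI p.1 q.1 ∨ ∃ h : eqI p.1 q.1, neqL q.1 (tr p.1 q.1 h p.2) q.2) →
      (neqI q.1 p.1 ∨ ∃ h : eqI q.1 p.1, neqL p.1 (tr q.1 p.1 h q.2) p.2)) ∧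
    -- the Sigma-inequality is cotransitive
    (∀ p q : Σ i, lam i,
      (neqI p.1 q.1 ∨ ∃ h : eqI p.1 q.1, neqL q.1 (tr p.1 q.1 h p.2) q.2) →
      ∀ r : Σ i, lam i,
        (neqI r.1 p.1 ∨ ∃ h : eqI r.1 p.1, neqL p.1 (tr r.1 p.1 h r.2) p.2) ∨
        (neqI r.1 q.1 ∨ ∃ h : eqI r.1 q.1, neqL q.1 (tr r.1 q.1 h r.2) q.2)) := by
  have hI : IsApartness eqI neqI := ⟨neqI_ineq1, neqI_symm, neqI_cotrans⟩
  have hL : ∀ i, IsApartness (eqL i) (neqL i) :=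
    fun i => ⟨neqL_ineq1 i, neqL_symm i, neqL_cotrans i⟩
  exact ⟨sigmaNe_disjoint hI hL, sigmaNe_symm hI eqI_equiv hL tr_se tr_id tr_comp,
    sigmaNe_cotrans hI eqI_equiv discI hL tr_se tr_comp⟩

/-- If the index set with inequality is discrete and its inequality is an
apartness relation, and the inequality of every fiber is an apartness relation, then the
inequality of the Sigma-set of the family is an apartness relation. -/
theorem sigmaSet_apartness {I : Type*} (eqI neqI : I → I → Prop)
    (eqI_equiv : Equivalence eqI)
    (neqI_ineq1 : ∀ i j, eqI i j → neqI i j → False)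
    (neqI_symm : ∀ i j, neqI i j → neqI j i)
    (neqI_cotrans : ∀ i j, neqI i j → ∀ k, neqI k i ∨ neqI k j)
    (discI : ∀ i j, eqI i j ∨ neqI i j)
    (lam : I → Type*)
    (eqL neqL : ∀ i, lam i → lam i → Prop)
    (eqL_equiv : ∀ i, Equivalence (eqL i))
    (neqL_ineq1 : ∀ i (x y : lam i), eqL i x y → neqL i x y → False)
    (neqL_symm : ∀ i (x y : lam i), neqL i x y → neqL i y x)
    (neqL_cotrans : ∀ i (x y : lam i), neqL i x y → ∀ z, neqL i z x ∨ neqL i z y)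
    (tr : ∀ i j, eqI i j → lam i → lam j)
    (tr_eq : ∀ i j (h : eqI i j) (x x' : lam i),
      eqL i x x' → eqL j (tr i j h x) (tr i j h x'))
    (tr_se : ∀ i j (h : eqI i j) (x x' : lam i),
      neqL j (tr i j h x) (tr i j h x') → neqL i x x')
    (tr_id : ∀ i (h : eqI i i) (x : lam i), eqL i (tr i i h x) x)
    (tr_comp : ∀ i j k (hij : eqI i j) (hjk : eqI j k) (hik : eqI i k) (x : lam i),
      eqL k (tr j k hjk (tr i j hij x)) (tr i k hik x)) :
    -- the Sigma-inequality never holds together with the Sigma-equality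
    (∀ p q : Σ i, lam i,
      (∃ h : eqI p.1 q.1, eqL q.1 (tr p.1 q.1 h p.2) q.2) →
      (neqI p.1 q.1 ∨ ∃ h : eqI p.1 q.1, neqL q.1 (tr p.1 q.1 h p.2) q.2) → False) ∧
    -- the Sigma-inequality is symmetric
    (∀ p q : Σ i, lam i,
      (neqI p.1 q.1 ∨ ∃ h : eqI p.1 q.1, neqL q.1 (tr p.1 q.1 h p.2) q.2) →
      (neqI q.1 p.1 ∨ ∃ h : eqI q.1 p.1, neqL p.1 (tr q.1 p.1 h q.2) p.2)) ∧
    -- the Sigma-inequality is cotransitive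
    (∀ p q : Σ i, lam i,
      (neqI p.1 q.1 ∨ ∃ h : eqI p.1 q.1, neqL q.1 (tr p.1 q.1 h p.2) q.2) →
      ∀ r : Σ i, lam i,
        (neqI r.1 p.1 ∨ ∃ h : eqI r.1 p.1, neqL p.1 (tr r.1 p.1 h r.2) p.2) ∨
        (neqI r.1 q.1 ∨ ∃ h : eqI r.1 q.1, neqL q.1 (tr r.1 q.1 h r.2) q.2)) :=
  sigmaSet_apartness_general eqI neqI eqI_equiv neqI_ineq1 neqI_symm neqI_cotrans discI lam eqL neqL
    neqL_ineq1 neqL_symm neqL_cotrans tr tr_se tr_id tr_comp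
end

section
/- Let X be a set with an equivalence relation =_X, let (Y, =_Y, ≠_Y; G) be a completely separated set, and let 𝔽(X,Y) be the set of =_X-to-=_Y equality-preserving functions from X to Y. For x ∈ X and g ∈ G let φ_{x,g} : 𝔽(X,Y) → ℝ be defined by φ_{x,g}(h) := g(h(x)), and put F→G := {φ_{x,g} | x ∈ X, g ∈ G}. Then: (1) for all h, h' ∈ 𝔽(X,Y), h ≠_{(𝔽(X,Y), F→G)} h' if and only if there exists x ∈ X with h(x) ≠_{(Y,G)} h'(x); (2) if h =_{(𝔽(X,Y), F→G)} h', then h(x) =_Y h'(x) for every x ∈ X; in particular the inequality induced by F→G is tight with respect to pointwise =_Y-equality of functions. -/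
section EvalFunctionals

variable {H X Y : Type*}

def evalFunctionals (ev : H → X → Y) (G : Set (Y → ℝ)) : Set (H → ℝ) :=
  {φ | ∃ x : X, ∃ g ∈ G, φ = fun h => g (ev h x)}

theorem exists_mem_evalFunctionals_ne_iff (ev : H → X → Y) (G : Set (Y → ℝ)) (h h' : H) :
    (∃ φ ∈ evalFunctionals ev G, φ h ≠ φ h') ↔ ∃ x : X, ∃ g ∈ G, g (ev h x) ≠ g (ev h' x) := by
  constructor
  · rintro ⟨φ, ⟨x, g, hg, rfl⟩, hne⟩
    exact ⟨x, g, hg, hne⟩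
  · rintro ⟨x, g, hg, hne⟩
    exact ⟨_, ⟨x, g, hg, rfl⟩, hne⟩

theorem eval_rel_of_forall_mem_evalFunctionals_eq {ev : H → X → Y} {G : Set (Y → ℝ)}
    {eqY : Y → Y → Prop} (hG_tight : ∀ y y', (∀ g ∈ G, g y = g y') → eqY y y') {h h' : H}
    (heq : ∀ φ ∈ evalFunctionals ev G, φ h = φ h') (x : X) : eqY (ev h x) (ev h' x) :=
  hG_tight _ _ fun g hg => heq _ ⟨x, g, hg, rfl⟩

end EvalFunctionals

theorem funSpace_completely_separated_general {X Y : Type*}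
    (eqX : X → X → Prop)
    (eqY : Y → Y → Prop)
    (G : Set (Y → ℝ))
    (hG_tight : ∀ y y', (∀ g ∈ G, g y = g y') → eqY y y')
    (FtoG : Set ({h : X → Y // ∀ x x', eqX x x' → eqY (h x) (h x')} → ℝ))
    (hFtoG : FtoG = {φ | ∃ x : X, ∃ g ∈ G, φ = fun h => g (h.1 x)}) :
    -- (1) the induced inequality is the pointwise "exists" inequality
    (∀ h h' : {h : X → Y // ∀ x x', eqX x x' → eqY (h x) (h x')},
      (∃ φ ∈ FtoG, φ h ≠ φ h') ↔ ∃ x : X, ∃ g ∈ G, g (h.1 x) ≠ g (h'.1 x)) ∧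
    -- (2) tightness: the induced equality implies pointwise =_Y equality
    (∀ h h' : {h : X → Y // ∀ x x', eqX x x' → eqY (h x) (h x')},
      (∀ φ ∈ FtoG, φ h = φ h') → ∀ x : X, eqY (h.1 x) (h'.1 x)) := by
  have hFtoG' : FtoG = evalFunctionals Subtype.val G := hFtoG
  subst hFtoG'
  exact ⟨exists_mem_evalFunctionals_ne_iff _ G,
    fun _ _ => eval_rel_of_forall_mem_evalFunctionals_eq hG_tight⟩

/-- The function set 𝔽(X,Y) (the =_X-to-=_Y equality-preserving functions,
here a subtype) with the set of functions F→G := {φ_{x,g} | x ∈ X, g ∈ G},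
φ_{x,g}(h) = g(h(x)), is completely separated: the induced inequality is the pointwise
exists-inequality, and the induced equality implies pointwise =_Y-equality (tightness). -/
theorem funSpace_completely_separated {X Y : Type*}
    (eqX : X → X → Prop) (eqX_equiv : Equivalence eqX)
    (eqY neqY : Y → Y → Prop) (eqY_equiv : Equivalence eqY)
    (G : Set (Y → ℝ))
    (hG_pres : ∀ g ∈ G, ∀ y y', eqY y y' → g y = g y')
    (hneqY : ∀ y y', neqY y y' ↔ ∃ g ∈ G, g y ≠ g y')
    (hG_tight : ∀ y y', (∀ g ∈ G, g y = g y') → eqY y y')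
    (FtoG : Set ({h : X → Y // ∀ x x', eqX x x' → eqY (h x) (h x')} → ℝ))
    (hFtoG : FtoG = {φ | ∃ x : X, ∃ g ∈ G, φ = fun h => g (h.1 x)}) :
    -- (1) the induced inequality is the pointwise "exists" inequality
    (∀ h h' : {h : X → Y // ∀ x x', eqX x x' → eqY (h x) (h x')},
      (∃ φ ∈ FtoG, φ h ≠ φ h') ↔ ∃ x : X, ∃ g ∈ G, g (h.1 x) ≠ g (h'.1 x)) ∧
    -- (2) tightness: the induced equality implies pointwise =_Y equality
    (∀ h h' : {h : X → Y // ∀ x x', eqX x x' → eqY (h x) (h x')},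
      (∀ φ ∈ FtoG, φ h = φ h') → ∀ x : X, eqY (h.1 x) (h'.1 x)) :=
  funSpace_completely_separated_general eqX eqY G hG_tight FtoG hFtoG
end

section
/- Let S = (λ₀, λ₁; φ₀, φ₁) be a family of completely separated sets over a completely separated set (I, =_I, ≠_I; K), and let Π_{i∈I} λ₀(i) be the Pi-set of the underlying family, consisting of dependent functions Θ with Θ_i ∈ λ₀(i) and Θ_j =_{λ₀(j)} λ_{ij}(Θ_i) whenever i =_I j. Let ⊗_{i∈I} F_i := {Θ ↦ f(Θ_i) | i ∈ I, f ∈ F_i} be the corresponding set of real-valued functions on the Pi-set. Then: (1) for all Θ, Θ' in the Pi-set, Θ ≠_{(Π, ⊗F_i)} Θ' if and only if there exists i ∈ I with Θ_i ≠_{λ₀(i)} Θ'_i; and (2) the induced inequality is tight: if Θ =_{(Π, ⊗F_i)} Θ', then Θ_i =_{λ₀(i)} Θ'_i for every i ∈ I. Hence the Pi-set with these structures is a completely separated set. -/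
/-- The paper's `⊗_{i∈I} F_i` when `Z` is the Pi-set and `p i` is evaluation at `i`. -/
def pullbackFunctions {ι Z : Type*} {X : ι → Type*} (p : ∀ i, Z → X i)
    (F : ∀ i, Set (X i → ℝ)) : Set (Z → ℝ) :=
  {φ | ∃ i, ∃ f ∈ F i, φ = fun z => f (p i z)}

section pullbackFunctions

variable {ι Z : Type*} {X : ι → Type*} (p : ∀ i, Z → X i) (F : ∀ i, Set (X i → ℝ))

theorem exists_pullbackFunctions_ne_iff (z z' : Z) :
    (∃ φ ∈ pullbackFunctions p F, φ z ≠ φ z') ↔ ∃ i, ∃ f ∈ F i, f (p i z) ≠ f (p i z') := by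
  constructor
  · rintro ⟨φ, ⟨i, f, hf, rfl⟩, hne⟩
    exact ⟨i, f, hf, hne⟩
  · rintro ⟨i, f, hf, hne⟩
    exact ⟨_, ⟨i, f, hf, rfl⟩, hne⟩

theorem forall_pullbackFunctions_eq_iff (z z' : Z) :
    (∀ φ ∈ pullbackFunctions p F, φ z = φ z') ↔ ∀ i, ∀ f ∈ F i, f (p i z) = f (p i z') := by
  simpa only [not_exists, not_and, ne_eq, not_not] using
    (exists_pullbackFunctions_ne_iff p F z z').not

end pullbackFunctions

theorem piSet_completely_separated_general {I : Type*}
    (eqI : I → I → Prop)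
    (lam : I → Type*)
    (eqL neqL : ∀ i, lam i → lam i → Prop)
    (F : ∀ i, Set (lam i → ℝ))
    (hneqL : ∀ i (x x' : lam i), neqL i x x' ↔ ∃ f ∈ F i, f x ≠ f x')
    (hF_tight : ∀ i (x x' : lam i), (∀ f ∈ F i, f x = f x') → eqL i x x')
    (tr : ∀ i j, eqI i j → lam i → lam j)
    (tensorF : Set ({Θ : ∀ i, lam i //
        ∀ i j (h : eqI i j), eqL j (Θ j) (tr i j h (Θ i))} → ℝ))
    (htensorF : tensorF = {φ | ∃ i, ∃ f ∈ F i, φ = fun Θ => f (Θ.1 i)}) :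
    -- (1) the induced inequality on the Pi-set
    (∀ Θ Θ' : {Θ : ∀ i, lam i // ∀ i j (h : eqI i j), eqL j (Θ j) (tr i j h (Θ i))},
      (∃ φ ∈ tensorF, φ Θ ≠ φ Θ') ↔ ∃ i, neqL i (Θ.1 i) (Θ'.1 i)) ∧
    -- (2) tightness w.r.t. the pointwise equality of the Pi-set
    (∀ Θ Θ' : {Θ : ∀ i, lam i // ∀ i j (h : eqI i j), eqL j (Θ j) (tr i j h (Θ i))},
      (∀ φ ∈ tensorF, φ Θ = φ Θ') → ∀ i, eqL i (Θ.1 i) (Θ'.1 i)) := by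
  have htensor : tensorF = pullbackFunctions (fun i Θ => Θ.1 i) F := htensorF
  subst htensor
  refine ⟨fun Θ Θ' => ?_, fun Θ Θ' hΘ i => ?_⟩
  · simp only [exists_pullbackFunctions_ne_iff, hneqL]
  · exact hF_tight i _ _ ((forall_pullbackFunctions_eq_iff _ F Θ Θ').1 hΘ i)

/-- The Pi-set of a family of completely separated sets, equipped with the
function set ⊗_{i∈I} F_i := {Θ ↦ f(Θ_i) | i ∈ I, f ∈ F_i}, is a completely separated set:
the induced inequality is the "exists at some index" inequality, and it is tight. -/
theorem piSet_completely_separated {I : Type*}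
    (eqI neqI : I → I → Prop) (eqI_equiv : Equivalence eqI)
    (K : Set (I → ℝ))
    (hK_pres : ∀ k ∈ K, ∀ i j, eqI i j → k i = k j)
    (hneqI : ∀ i j, neqI i j ↔ ∃ k ∈ K, k i ≠ k j)
    (hK_tight : ∀ i j, (∀ k ∈ K, k i = k j) → eqI i j)
    (lam : I → Type*)
    (eqL neqL : ∀ i, lam i → lam i → Prop)
    (eqL_equiv : ∀ i, Equivalence (eqL i))
    (F : ∀ i, Set (lam i → ℝ))
    (hF_pres : ∀ i, ∀ f ∈ F i, ∀ x x', eqL i x x' → f x = f x')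
    (hneqL : ∀ i (x x' : lam i), neqL i x x' ↔ ∃ f ∈ F i, f x ≠ f x')
    (hF_tight : ∀ i (x x' : lam i), (∀ f ∈ F i, f x = f x') → eqL i x x')
    (tr : ∀ i j, eqI i j → lam i → lam j)
    (tr_eq : ∀ i j (h : eqI i j) (x x' : lam i),
      eqL i x x' → eqL j (tr i j h x) (tr i j h x'))
    (tr_se : ∀ i j (h : eqI i j) (x x' : lam i),
      neqL j (tr i j h x) (tr i j h x') → neqL i x x')
    (tr_id : ∀ i (h : eqI i i) (x : lam i), eqL i (tr i i h x) x)
    (tr_comp : ∀ i j k (hij : eqI i j) (hjk : eqI j k) (hik : eqI i k) (x : lam i),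
      eqL k (tr j k hjk (tr i j hij x)) (tr i k hik x))
    (phi_mem : ∀ i j (hji : eqI j i), ∀ f ∈ F i, (fun y => f (tr j i hji y)) ∈ F j)
    (tensorF : Set ({Θ : ∀ i, lam i //
        ∀ i j (h : eqI i j), eqL j (Θ j) (tr i j h (Θ i))} → ℝ))
    (htensorF : tensorF = {φ | ∃ i, ∃ f ∈ F i, φ = fun Θ => f (Θ.1 i)}) :
    -- (1) the induced inequality on the Pi-set
    (∀ Θ Θ' : {Θ : ∀ i, lam i // ∀ i j (h : eqI i j), eqL j (Θ j) (tr i j h (Θ i))},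
      (∃ φ ∈ tensorF, φ Θ ≠ φ Θ') ↔ ∃ i, neqL i (Θ.1 i) (Θ'.1 i)) ∧
    -- (2) tightness w.r.t. the pointwise equality of the Pi-set
    (∀ Θ Θ' : {Θ : ∀ i, lam i // ∀ i j (h : eqI i j), eqL j (Θ j) (tr i j h (Θ i))},
      (∀ φ ∈ tensorF, φ Θ = φ Θ') → ∀ i, eqL i (Θ.1 i) (Θ'.1 i)) :=
  piSet_completely_separated_general eqI lam eqL neqL F hneqL hF_tight tr tensorF htensorF
end

section
/- Let (I, =_I, ≠_I; K) be a discrete completely separated set and S = (λ₀, λ₁; φ₀, φ₁) a family of completely separated sets over it. On the Sigma-set, consider the functions k̂ : (i,x) ↦ k(i) for k ∈ K, and Φ̂ : (i,x) ↦ Φ_i(x) for Φ ∈ Π_{i∈I} F_i. Then, for all (i,x), (j,y) in the Sigma-set: if some function in K̂ ∪ Ĥ takes different real values at (i,x) and at (j,y), then (i,x) ≠ (j,y) in the Sigma-set, i.e., i ≠_I j, or i =_I j and λ_{ij}(x) ≠_{λ₀(j)} y. -/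
section SigmaSeparation

variable {I : Type*} {eqI : I → I → Prop} {lam : I → Type*}

lemma not_exists_ne_of_preserves {K : Set (I → ℝ)}
    (hK_pres : ∀ k ∈ K, ∀ i j, eqI i j → k i = k j) {i j : I} (h : eqI i j) :
    ¬ ∃ k ∈ K, k i ≠ k j := by
  rintro ⟨k, hk, hne⟩
  exact hne (hK_pres k hk i j h)

/-- Compatibility of `Φ`, read with the roles of `i` and `j` swapped, already says
`Φ j (tr i j h x) = Φ i x`; no round trip `tr j i ∘ tr i j` is needed. -/
lemma neqL_transport_of_dependent_ne {neqL : ∀ i, lam i → lam i → Prop}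
    {F : ∀ i, Set (lam i → ℝ)} (hneqL : ∀ i (x x' : lam i), (∃ f ∈ F i, f x ≠ f x') → neqL i x x')
    {tr : ∀ i j, eqI i j → lam i → lam j} {Φ : ∀ i, lam i → ℝ} (hΦF : ∀ i, Φ i ∈ F i)
    (hΦ : ∀ i j (hji : eqI j i) (y : lam j), Φ j y = Φ i (tr j i hji y))
    {i j : I} (h : eqI i j) {x : lam i} {y : lam j} (hne : Φ i x ≠ Φ j y) :
    neqL j (tr i j h x) y :=
  hneqL j _ y ⟨Φ j, hΦF j, by rwa [← hΦ j i h x]⟩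

end SigmaSeparation

theorem sigma_hatKH_implies_sigmaNeq_general {I : Type*}
    (eqI neqI : I → I → Prop)
    (K : Set (I → ℝ))
    (hK_pres : ∀ k ∈ K, ∀ i j, eqI i j → k i = k j)
    (discI : ∀ i j, eqI i j ∨ neqI i j)
    (lam : I → Type*)
    (neqL : ∀ i, lam i → lam i → Prop)
    (F : ∀ i, Set (lam i → ℝ))
    (hneqL : ∀ i (x x' : lam i), neqL i x x' ↔ ∃ f ∈ F i, f x ≠ f x')
    (tr : ∀ i j, eqI i j → lam i → lam j) :
    ∀ p q : Σ i, lam i,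
      -- some k̂ (k ∈ K) or some Φ̂ (Φ ∈ Π_{i∈I} F_i) separates (i,x) from (j,y)
      ((∃ k ∈ K, k p.1 ≠ k q.1) ∨
       (∃ Φ : ∀ i, lam i → ℝ,
         ((∀ i, Φ i ∈ F i) ∧
          (∀ i j (hji : eqI j i) (y : lam j), Φ j y = Φ i (tr j i hji y))) ∧
         Φ p.1 p.2 ≠ Φ q.1 q.2)) →
      -- the Sigma-inequality
      (neqI p.1 q.1 ∨ ∃ h : eqI p.1 q.1, neqL q.1 (tr p.1 q.1 h p.2) q.2) := by
  rintro ⟨i, x⟩ ⟨j, y⟩ hsep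
  rcases discI i j with h | h
  · refine Or.inr ⟨h, ?_⟩
    rcases hsep with hK | ⟨Φ, ⟨hΦF, hΦ⟩, hne⟩
    · exact absurd hK (not_exists_ne_of_preserves hK_pres h)
    · exact neqL_transport_of_dependent_ne (fun i x x' => (hneqL i x x').2) hΦF hΦ h hne
  · exact Or.inl h

/-- Over a discrete completely separated index set, if some function in
K̂ ∪ Ĥ takes different values at (i,x) and (j,y), then (i,x) ≠ (j,y) in the Sigma-set. -/
theorem sigma_hatKH_implies_sigmaNeq {I : Type*}
    (eqI neqI : I → I → Prop) (eqI_equiv : Equivalence eqI)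
    (K : Set (I → ℝ))
    (hK_pres : ∀ k ∈ K, ∀ i j, eqI i j → k i = k j)
    (hneqI : ∀ i j, neqI i j ↔ ∃ k ∈ K, k i ≠ k j)
    (hK_tight : ∀ i j, (∀ k ∈ K, k i = k j) → eqI i j)
    (discI : ∀ i j, eqI i j ∨ neqI i j)
    (lam : I → Type*)
    (eqL neqL : ∀ i, lam i → lam i → Prop)
    (eqL_equiv : ∀ i, Equivalence (eqL i))
    (F : ∀ i, Set (lam i → ℝ))
    (hF_pres : ∀ i, ∀ f ∈ F i, ∀ x x', eqL i x x' → f x = f x')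
    (hneqL : ∀ i (x x' : lam i), neqL i x x' ↔ ∃ f ∈ F i, f x ≠ f x')
    (hF_tight : ∀ i (x x' : lam i), (∀ f ∈ F i, f x = f x') → eqL i x x')
    (tr : ∀ i j, eqI i j → lam i → lam j)
    (tr_eq : ∀ i j (h : eqI i j) (x x' : lam i),
      eqL i x x' → eqL j (tr i j h x) (tr i j h x'))
    (tr_se : ∀ i j (h : eqI i j) (x x' : lam i),
      neqL j (tr i j h x) (tr i j h x') → neqL i x x')
    (tr_id : ∀ i (h : eqI i i) (x : lam i), eqL i (tr i i h x) x)
    (tr_comp : ∀ i j k (hij : eqI i j) (hjk : eqI j k) (hik : eqI i k) (x : lam i),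
      eqL k (tr j k hjk (tr i j hij x)) (tr i k hik x))
    (phi_mem : ∀ i j (hji : eqI j i), ∀ f ∈ F i, (fun y => f (tr j i hji y)) ∈ F j) :
    ∀ p q : Σ i, lam i,
      -- some k̂ (k ∈ K) or some Φ̂ (Φ ∈ Π_{i∈I} F_i) separates (i,x) from (j,y)
      ((∃ k ∈ K, k p.1 ≠ k q.1) ∨
       (∃ Φ : ∀ i, lam i → ℝ,
         ((∀ i, Φ i ∈ F i) ∧
          (∀ i j (hji : eqI j i) (y : lam j), Φ j y = Φ i (tr j i hji y))) ∧
         Φ p.1 p.2 ≠ Φ q.1 q.2)) →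
      -- the Sigma-inequality
      (neqI p.1 q.1 ∨ ∃ h : eqI p.1 q.1, neqL q.1 (tr p.1 q.1 h p.2) q.2) :=
  sigma_hatKH_implies_sigmaNeq_general eqI neqI K hK_pres discI lam neqL F hneqL tr
end

section
/- Let (I, =_I, ≠_I; K) be a discrete completely separated set and S = (λ₀, λ₁; φ₀, φ₁) a family of completely separated sets over it. Assume that for every j ∈ I and every h ∈ F_j there exists Φ ∈ Π_{i∈I} F_i with Φ_j = h (as functions on λ₀(j)). Then, for all (i,x), (j,y) in the Sigma-set: if (i,x) ≠ (j,y) in the Sigma-set (i.e., i ≠_I j, or i =_I j and λ_{ij}(x) ≠_{λ₀(j)} y), then some function in K̂ ∪ Ĥ takes different real values at (i,x) and at (j,y). -/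
theorem sigma_sigmaNeq_implies_hatKH_general {I : Type*}
    (eqI neqI : I → I → Prop)
    (K : Set (I → ℝ))
    (hneqI : ∀ i j, neqI i j ↔ ∃ k ∈ K, k i ≠ k j)
    (lam : I → Type*)
    (neqL : ∀ i, lam i → lam i → Prop)
    (F : ∀ i, Set (lam i → ℝ))
    (hneqL : ∀ i (x x' : lam i), neqL i x x' ↔ ∃ f ∈ F i, f x ≠ f x')
    (tr : ∀ i j, eqI i j → lam i → lam j)
    -- every h ∈ F_j extends to some Φ ∈ Π_{i∈I} F_i with Φ_j = h
    (hext : ∀ j, ∀ h ∈ F j, ∃ Φ : ∀ i, lam i → ℝ,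
      ((∀ i, Φ i ∈ F i) ∧
       (∀ i j' (hji : eqI j' i) (y : lam j'), Φ j' y = Φ i (tr j' i hji y))) ∧
      ∀ y : lam j, Φ j y = h y) :
    ∀ p q : Σ i, lam i,
      -- the Sigma-inequality
      (neqI p.1 q.1 ∨ ∃ h : eqI p.1 q.1, neqL q.1 (tr p.1 q.1 h p.2) q.2) →
      -- implies: some k̂ (k ∈ K) or some Φ̂ (Φ ∈ Π_{i∈I} F_i) separates (i,x) from (j,y)
      ((∃ k ∈ K, k p.1 ≠ k q.1) ∨
       (∃ Φ : ∀ i, lam i → ℝ,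
         ((∀ i, Φ i ∈ F i) ∧
          (∀ i j (hji : eqI j i) (y : lam j), Φ j y = Φ i (tr j i hji y))) ∧
         Φ p.1 p.2 ≠ Φ q.1 q.2)) := by
  rintro ⟨i, x⟩ ⟨j, y⟩ (hneq | ⟨hij, hneq⟩)
  · exact Or.inl ((hneqI i j).1 hneq)
  · obtain ⟨f, hf, hf_sep⟩ := (hneqL j (tr i j hij x) y).1 hneq
    obtain ⟨Φ, hΦ, hΦ_ext⟩ := hext j f hf
    -- Compatibility of Φ moves (i, x) into the fibre over j, where Φ agrees with f.
    have hΦ_at_x : Φ i x = f (tr i j hij x) := by rw [hΦ.2 j i hij x, hΦ_ext]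
    refine Or.inr ⟨Φ, hΦ, ?_⟩
    rwa [hΦ_at_x, hΦ_ext]

/-- Over a discrete completely separated index set, assuming every h ∈ F_j
extends to some Φ ∈ Π_{i∈I} F_i, if (i,x) ≠ (j,y) in the Sigma-set, then some function in
K̂ ∪ Ĥ takes different values at (i,x) and (j,y). -/
theorem sigma_sigmaNeq_implies_hatKH {I : Type*}
    (eqI neqI : I → I → Prop) (eqI_equiv : Equivalence eqI)
    (K : Set (I → ℝ))
    (hK_pres : ∀ k ∈ K, ∀ i j, eqI i j → k i = k j)
    (hneqI : ∀ i j, neqI i j ↔ ∃ k ∈ K, k i ≠ k j)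
    (hK_tight : ∀ i j, (∀ k ∈ K, k i = k j) → eqI i j)
    (discI : ∀ i j, eqI i j ∨ neqI i j)
    (lam : I → Type*)
    (eqL neqL : ∀ i, lam i → lam i → Prop)
    (eqL_equiv : ∀ i, Equivalence (eqL i))
    (F : ∀ i, Set (lam i → ℝ))
    (hF_pres : ∀ i, ∀ f ∈ F i, ∀ x x', eqL i x x' → f x = f x')
    (hneqL : ∀ i (x x' : lam i), neqL i x x' ↔ ∃ f ∈ F i, f x ≠ f x')
    (hF_tight : ∀ i (x x' : lam i), (∀ f ∈ F i, f x = f x') → eqL i x x')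
    (tr : ∀ i j, eqI i j → lam i → lam j)
    (tr_eq : ∀ i j (h : eqI i j) (x x' : lam i),
      eqL i x x' → eqL j (tr i j h x) (tr i j h x'))
    (tr_se : ∀ i j (h : eqI i j) (x x' : lam i),
      neqL j (tr i j h x) (tr i j h x') → neqL i x x')
    (tr_id : ∀ i (h : eqI i i) (x : lam i), eqL i (tr i i h x) x)
    (tr_comp : ∀ i j k (hij : eqI i j) (hjk : eqI j k) (hik : eqI i k) (x : lam i),
      eqL k (tr j k hjk (tr i j hij x)) (tr i k hik x))
    (phi_mem : ∀ i j (hji : eqI j i), ∀ f ∈ F i, (fun y => f (tr j i hji y)) ∈ F j)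
    -- every h ∈ F_j extends to some Φ ∈ Π_{i∈I} F_i with Φ_j = h
    (hext : ∀ j, ∀ h ∈ F j, ∃ Φ : ∀ i, lam i → ℝ,
      ((∀ i, Φ i ∈ F i) ∧
       (∀ i j' (hji : eqI j' i) (y : lam j'), Φ j' y = Φ i (tr j' i hji y))) ∧
      ∀ y : lam j, Φ j y = h y) :
    ∀ p q : Σ i, lam i,
      -- the Sigma-inequality
      (neqI p.1 q.1 ∨ ∃ h : eqI p.1 q.1, neqL q.1 (tr p.1 q.1 h p.2) q.2) →
      -- implies: some k̂ (k ∈ K) or some Φ̂ (Φ ∈ Π_{i∈I} F_i) separates (i,x) from (j,y)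
      ((∃ k ∈ K, k p.1 ≠ k q.1) ∨
       (∃ Φ : ∀ i, lam i → ℝ,
         ((∀ i, Φ i ∈ F i) ∧
          (∀ i j (hji : eqI j i) (y : lam j), Φ j y = Φ i (tr j i hji y))) ∧
         Φ p.1 p.2 ≠ Φ q.1 q.2)) :=
  sigma_sigmaNeq_implies_hatKH_general eqI neqI K hneqI lam neqL F hneqL tr hext
end

section
/- Let (I, =_I, ≠_I; K) be a completely separated set and S* = (λ₀, λ₁*; φ₀, φ₁*) a global family of completely separated sets over it. On the Sigma-set of S*, let K̂ := {(i,x) ↦ k(i) | k ∈ K} and Ĥ := {(i,x) ↦ Φ_i(x) | Φ ∈ Π_{i∈I} F_i}, where Π_{i∈I} F_i consists of the dependent functions Φ with Φ_i ∈ F_i and Φ_k = Φ_i ∘ λ*_{ki} whenever i =_I k. Then: (1) for all (i,x), (j,y), some function in K̂ ∪ Ĥ takes different values at (i,x) and (j,y) if and only if (i,x) ≠ (j,y) in the Sigma-set of S* (i.e., k(i) ≠ k(j) for some k ∈ K, or λ*_{ij}(x) ≠_{λ₀(j)} y); and (2) this inequality is tight: if every function in K̂ ∪ Ĥ takes equal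 values at (i,x) and (j,y), then i =_I j and λ*_{ij}(x) =_{λ₀(j)} y. Hence the Sigma-set of S*, equipped with K̂ ∪ Ĥ, is a completely separated set. -/
/-!
Each `f ∈ F j` extends to the element `Φ i := f ∘ λ*_{ij}` of `Π_{i∈I} F_i`: coherence of `Φ`
is the cocycle condition for the transport maps, and `Φ j = f` because `λ*_{jj}` is the identity.
Conversely, coherence gives `Φ i x = Φ j (λ*_{ij} x)` whenever `i =_I j`. So over equal indices
`Ĥ` separates `(i, x)` from `(j, y)` exactly when `F j` separates `λ*_{ij} x` from `y`, while over
unequal indices `K̂` separates them, by tightness of the inequality of `I`.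
-/

section GlobalFamily

variable {I : Type*} {lam : I → Type*} (eqI : I → I → Prop) (F : ∀ i, Set (lam i → ℝ))
  (tr : ∀ i j, lam i → lam j)

/-- Membership in the dependent product `Π_{i∈I} F_i`. -/
def IsCoherentSection (Φ : ∀ i, lam i → ℝ) : Prop :=
  (∀ i, Φ i ∈ F i) ∧ ∀ i k, eqI i k → ∀ y : lam k, Φ k y = Φ i (tr k i y)

variable {eqI F tr} (eqL : ∀ i, lam i → lam i → Prop)

theorem isCoherentSection_comp_tr (eqI_symm : ∀ i j, eqI i j → eqI j i)
    (hF_pres : ∀ i, ∀ f ∈ F i, ∀ x x', eqL i x x' → f x = f x')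
    (tr_comp : ∀ i j, eqI i j → ∀ k (x : lam i), eqL k (tr j k (tr i j x)) (tr i k x))
    (phi_mem : ∀ i j, ∀ f ∈ F i, (fun y => f (tr j i y)) ∈ F j)
    {j : I} {f : lam j → ℝ} (hf : f ∈ F j) :
    IsCoherentSection eqI F tr fun i y => f (tr i j y) :=
  ⟨fun i => phi_mem j i f hf, fun _ _ hik y =>
    (hF_pres j f hf _ _ (tr_comp _ _ (eqI_symm _ _ hik) j y)).symm⟩

theorem exists_coherentSection_ne_iff (eqI_symm : ∀ i j, eqI i j → eqI j i)
    (hF_pres : ∀ i, ∀ f ∈ F i, ∀ x x', eqL i x x' → f x = f x')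
    (tr_id : ∀ i (x : lam i), eqL i (tr i i x) x)
    (tr_comp : ∀ i j, eqI i j → ∀ k (x : lam i), eqL k (tr j k (tr i j x)) (tr i k x))
    (phi_mem : ∀ i j, ∀ f ∈ F i, (fun y => f (tr j i y)) ∈ F j)
    {i j : I} (hij : eqI i j) (x : lam i) (y : lam j) :
    (∃ Φ, IsCoherentSection eqI F tr Φ ∧ Φ i x ≠ Φ j y) ↔
      ∃ f ∈ F j, f (tr i j x) ≠ f y := by
  constructor
  · rintro ⟨Φ, ⟨hmem, hcoh⟩, hne⟩
    exact ⟨Φ j, hmem j, hcoh j i (eqI_symm _ _ hij) x ▸ hne⟩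
  · rintro ⟨f, hf, hne⟩
    have hf_self : f (tr j j y) = f y := hF_pres j f hf _ _ (tr_id j y)
    exact ⟨_, isCoherentSection_comp_tr eqL eqI_symm hF_pres tr_comp phi_mem hf,
      hf_self ▸ hne⟩

end GlobalFamily

theorem global_sigma_completely_separated_general {I : Type*}
    (eqI : I → I → Prop) (eqI_equiv : Equivalence eqI)
    (K : Set (I → ℝ))
    (hK_tight : ∀ i j, (∀ k ∈ K, k i = k j) → eqI i j)
    (lam : I → Type*)
    (eqL neqL : ∀ i, lam i → lam i → Prop)
    (F : ∀ i, Set (lam i → ℝ))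
    (hF_pres : ∀ i, ∀ f ∈ F i, ∀ x x', eqL i x x' → f x = f x')
    (hneqL : ∀ i (x x' : lam i), neqL i x x' ↔ ∃ f ∈ F i, f x ≠ f x')
    (hF_tight : ∀ i (x x' : lam i), (∀ f ∈ F i, f x = f x') → eqL i x x')
    -- global transport maps, defined for every pair (i,j)
    (tr : ∀ i j, lam i → lam j)
    (tr_id : ∀ i (x : lam i), eqL i (tr i i x) x)
    (tr_comp : ∀ i j, eqI i j → ∀ k (x : lam i), eqL k (tr j k (tr i j x)) (tr i k x))
    (phi_mem : ∀ i j, ∀ f ∈ F i, (fun y => f (tr j i y)) ∈ F j) :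
    -- (1) the inequality induced by K̂ ∪ Ĥ coincides with the Sigma-inequality
    (∀ p q : Σ i, lam i,
      ((∃ k ∈ K, k p.1 ≠ k q.1) ∨
       (∃ Φ : ∀ i, lam i → ℝ,
         ((∀ i, Φ i ∈ F i) ∧
          (∀ i k, eqI i k → ∀ y : lam k, Φ k y = Φ i (tr k i y))) ∧
         Φ p.1 p.2 ≠ Φ q.1 q.2)) ↔
      ((∃ k ∈ K, k p.1 ≠ k q.1) ∨ neqL q.1 (tr p.1 q.1 p.2) q.2)) ∧
    -- (2) tightness: equality under all functions of K̂ ∪ Ĥ gives the Sigma-equality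
    (∀ p q : Σ i, lam i,
      ((∀ k ∈ K, k p.1 = k q.1) ∧
       (∀ Φ : ∀ i, lam i → ℝ,
         ((∀ i, Φ i ∈ F i) ∧
          (∀ i k, eqI i k → ∀ y : lam k, Φ k y = Φ i (tr k i y))) →
         Φ p.1 p.2 = Φ q.1 q.2)) →
      eqI p.1 q.1 ∧ eqL q.1 (tr p.1 q.1 p.2) q.2) := by
  have separates_iff := @exists_coherentSection_ne_iff I lam eqI F tr eqL
    (fun _ _ h => eqI_equiv.symm h) hF_pres tr_id tr_comp phi_mem
  refine ⟨fun ⟨i, x⟩ ⟨j, y⟩ => ?_, fun ⟨i, x⟩ ⟨j, y⟩ ⟨hK, hΦ⟩ => ?_⟩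
  · by_cases hij : eqI i j
    · exact or_congr_right ((separates_iff hij x y).trans (hneqL j _ y).symm)
    · have hK_ne : ∃ k ∈ K, k i ≠ k j := by
        by_contra! hK
        exact hij (hK_tight i j hK)
      exact iff_of_true (Or.inl hK_ne) (Or.inl hK_ne)
  · have hij : eqI i j := hK_tight i j hK
    refine ⟨hij, hF_tight j _ y fun f hf => ?_⟩
    by_contra hne
    obtain ⟨Φ, hΦ_mem, hΦ_ne⟩ := (separates_iff hij x y).mpr ⟨f, hf, hne⟩
    exact hΦ_ne (hΦ Φ hΦ_mem)

/-- The Sigma-set of a global family of completely separated sets, equipped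
with the functions K̂ ∪ Ĥ, is a completely separated set: the inequality induced by
K̂ ∪ Ĥ coincides with the Sigma-inequality, and it is tight. -/
theorem global_sigma_completely_separated {I : Type*}
    (eqI neqI : I → I → Prop) (eqI_equiv : Equivalence eqI)
    (K : Set (I → ℝ))
    (hK_pres : ∀ k ∈ K, ∀ i j, eqI i j → k i = k j)
    (hneqI : ∀ i j, neqI i j ↔ ∃ k ∈ K, k i ≠ k j)
    (hK_tight : ∀ i j, (∀ k ∈ K, k i = k j) → eqI i j)
    (lam : I → Type*)
    (eqL neqL : ∀ i, lam i → lam i → Prop)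
    (eqL_equiv : ∀ i, Equivalence (eqL i))
    (F : ∀ i, Set (lam i → ℝ))
    (hF_pres : ∀ i, ∀ f ∈ F i, ∀ x x', eqL i x x' → f x = f x')
    (hneqL : ∀ i (x x' : lam i), neqL i x x' ↔ ∃ f ∈ F i, f x ≠ f x')
    (hF_tight : ∀ i (x x' : lam i), (∀ f ∈ F i, f x = f x') → eqL i x x')
    -- global transport maps, defined for every pair (i,j)
    (tr : ∀ i j, lam i → lam j)
    (tr_eq : ∀ i j (x x' : lam i), eqL i x x' → eqL j (tr i j x) (tr i j x'))
    (tr_se : ∀ i j (x x' : lam i), neqL j (tr i j x) (tr i j x') → neqL i x x')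
    (tr_id : ∀ i (x : lam i), eqL i (tr i i x) x)
    (tr_comp : ∀ i j, eqI i j → ∀ k (x : lam i), eqL k (tr j k (tr i j x)) (tr i k x))
    (phi_mem : ∀ i j, ∀ f ∈ F i, (fun y => f (tr j i y)) ∈ F j) :
    -- (1) the inequality induced by K̂ ∪ Ĥ coincides with the Sigma-inequality
    (∀ p q : Σ i, lam i,
      ((∃ k ∈ K, k p.1 ≠ k q.1) ∨
       (∃ Φ : ∀ i, lam i → ℝ,
         ((∀ i, Φ i ∈ F i) ∧
          (∀ i k, eqI i k → ∀ y : lam k, Φ k y = Φ i (tr k i y))) ∧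
         Φ p.1 p.2 ≠ Φ q.1 q.2)) ↔
      ((∃ k ∈ K, k p.1 ≠ k q.1) ∨ neqL q.1 (tr p.1 q.1 p.2) q.2)) ∧
    -- (2) tightness: equality under all functions of K̂ ∪ Ĥ gives the Sigma-equality
    (∀ p q : Σ i, lam i,
      ((∀ k ∈ K, k p.1 = k q.1) ∧
       (∀ Φ : ∀ i, lam i → ℝ,
         ((∀ i, Φ i ∈ F i) ∧
          (∀ i k, eqI i k → ∀ y : lam k, Φ k y = Φ i (tr k i y))) →
         Φ p.1 p.2 = Φ q.1 q.2)) →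
      eqI p.1 q.1 ∧ eqL q.1 (tr p.1 q.1 p.2) q.2) :=
  global_sigma_completely_separated_general eqI eqI_equiv K hK_tight lam eqL neqL F hF_pres hneqL
    hF_tight tr tr_id tr_comp phi_mem
end

section
/- Let (X, =_X) be a set with an equivalence relation, 𝔽(X) the set of all =_X-preserving real-valued functions on X, and let the free completely separated set on X be εX := (X, =_{(X,𝔽(X))}, ≠_{(X,𝔽(X))}; 𝔽(X)). Then εX has the universal property of freeness: for every completely separated set (Y, =_Y, ≠_Y; G) and every =_X-preserving function h : X → Y, the same map h, viewed as a map from εX to Y, (1) preserves the equality =_{(X,𝔽(X))}: x =_{(X,𝔽(X))} x' implies h(x) =_Y h(x'); and (2) is strongly extensional: h(x) ≠_{(Y,G)} h(x') implies x ≠_{(X,𝔽(X))} x'; moreover it is the unique strongly extensional function εX → Y agreeing pointwise with h. -/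
/-! For `g ∈ G`, the composite `g ∘ h` is `=_X`-preserving, hence belongs to `𝔽(X)`. So two points
that no function of `𝔽(X)` separates are not separated by any `g ∈ G` after applying `h`, and
tightness of `≠_{(Y,G)}` gives `h x =_Y h x'`; dually, a `g ∈ G` separating `h x` and `h x'`
yields the witness `g ∘ h ∈ 𝔽(X)` separating `x` and `x'`. -/

/-- The paper's `𝔽(X)`, for `r` the equality `=_X`. -/
def preservingFunctions {X : Type*} (r : X → X → Prop) : Set (X → ℝ) :=
  {f | ∀ x x', r x x' → f x = f x'}

section

variable {X Y : Type*} {eqX : X → X → Prop} {eqY : Y → Y → Prop} {G : Set (Y → ℝ)} {h : X → Y}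

theorem comp_mem_preservingFunctions (hG_pres : ∀ g ∈ G, ∀ y y', eqY y y' → g y = g y')
    (h_pres : ∀ x x', eqX x x' → eqY (h x) (h x')) {g : Y → ℝ} (hg : g ∈ G) :
    g ∘ h ∈ preservingFunctions eqX :=
  fun x x' hx => hG_pres g hg _ _ (h_pres x x' hx)

theorem rel_apply_of_forall_preservingFunctions_eq
    (hG_pres : ∀ g ∈ G, ∀ y y', eqY y y' → g y = g y')
    (hG_tight : ∀ y y', (∀ g ∈ G, g y = g y') → eqY y y')
    (h_pres : ∀ x x', eqX x x' → eqY (h x) (h x')) {x x' : X}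
    (hxx' : ∀ f ∈ preservingFunctions eqX, f x = f x') :
    eqY (h x) (h x') :=
  hG_tight _ _ fun _ hg => hxx' _ (comp_mem_preservingFunctions hG_pres h_pres hg)

theorem exists_preservingFunctions_ne_of_apply_ne
    (hG_pres : ∀ g ∈ G, ∀ y y', eqY y y' → g y = g y')
    (h_pres : ∀ x x', eqX x x' → eqY (h x) (h x')) {x x' : X}
    (hxx' : ∃ g ∈ G, g (h x) ≠ g (h x')) :
    ∃ f ∈ preservingFunctions eqX, f x ≠ f x' :=
  let ⟨_, hg, hne⟩ := hxx'
  ⟨_, comp_mem_preservingFunctions hG_pres h_pres hg, hne⟩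

end

theorem free_completely_separated_universal_general {X Y : Type*}
    (eqX : X → X → Prop)
    (FX : Set (X → ℝ))
    (hFX : FX = {f : X → ℝ | ∀ x x', eqX x x' → f x = f x'})
    (eqY : Y → Y → Prop) (eqY_equiv : Equivalence eqY)
    (G : Set (Y → ℝ))
    (hG_pres : ∀ g ∈ G, ∀ y y', eqY y y' → g y = g y')
    (hG_tight : ∀ y y', (∀ g ∈ G, g y = g y') → eqY y y')
    (h : X → Y)
    (h_pres : ∀ x x', eqX x x' → eqY (h x) (h x')) :
    -- (1) h preserves the equality induced by 𝔽(X)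
    (∀ x x', (∀ f ∈ FX, f x = f x') → eqY (h x) (h x')) ∧
    -- (2) h is strongly extensional w.r.t. ≠_{(Y,G)} and ≠_{(X,𝔽(X))}
    (∀ x x', (∃ g ∈ G, g (h x) ≠ g (h x')) → ∃ f ∈ FX, f x ≠ f x') ∧
    -- uniqueness: any two strongly extensional maps εX → Y agreeing pointwise with h
    -- agree pointwise with each other (w.r.t. =_Y)
    (∀ h₁ h₂ : X → Y,
      (∀ x x', (∃ g ∈ G, g (h₁ x) ≠ g (h₁ x')) → ∃ f ∈ FX, f x ≠ f x') →
      (∀ x x', (∃ g ∈ G, g (h₂ x) ≠ g (h₂ x')) → ∃ f ∈ FX, f x ≠ f x') →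
      (∀ x, eqY (h₁ x) (h x)) → (∀ x, eqY (h₂ x) (h x)) →
      ∀ x, eqY (h₁ x) (h₂ x)) := by
  change FX = preservingFunctions eqX at hFX
  subst hFX
  exact ⟨fun _ _ => rel_apply_of_forall_preservingFunctions_eq hG_pres hG_tight h_pres,
    fun _ _ => exists_preservingFunctions_ne_of_apply_ne hG_pres h_pres,
    fun _ _ _ _ h₁_eq h₂_eq x => eqY_equiv.trans (h₁_eq x) (eqY_equiv.symm (h₂_eq x))⟩

/-- Universal property of the free completely separated set
εX := (X, =_{(X,𝔽(X))}, ≠_{(X,𝔽(X))}; 𝔽(X)), where 𝔽(X) is the set of ALL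
=_X-preserving real-valued functions on X: every =_X-preserving function h : X → Y
into a completely separated set (Y, =_Y, ≠_Y; G), viewed as a map from εX,
preserves the induced equality, is strongly extensional, and is the unique strongly
extensional map εX → Y agreeing pointwise with h. -/
theorem free_completely_separated_universal {X Y : Type*}
    (eqX : X → X → Prop) (eqX_equiv : Equivalence eqX)
    (FX : Set (X → ℝ))
    (hFX : FX = {f : X → ℝ | ∀ x x', eqX x x' → f x = f x'})
    (eqY neqY : Y → Y → Prop) (eqY_equiv : Equivalence eqY)
    (G : Set (Y → ℝ))
    (hG_pres : ∀ g ∈ G, ∀ y y', eqY y y' → g y = g y')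
    (hneqY : ∀ y y', neqY y y' ↔ ∃ g ∈ G, g y ≠ g y')
    (hG_tight : ∀ y y', (∀ g ∈ G, g y = g y') → eqY y y')
    (h : X → Y)
    (h_pres : ∀ x x', eqX x x' → eqY (h x) (h x')) :
    -- (1) h preserves the equality induced by 𝔽(X)
    (∀ x x', (∀ f ∈ FX, f x = f x') → eqY (h x) (h x')) ∧
    -- (2) h is strongly extensional w.r.t. ≠_{(Y,G)} and ≠_{(X,𝔽(X))}
    (∀ x x', (∃ g ∈ G, g (h x) ≠ g (h x')) → ∃ f ∈ FX, f x ≠ f x') ∧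
    -- uniqueness: any two strongly extensional maps εX → Y agreeing pointwise with h
    -- agree pointwise with each other (w.r.t. =_Y)
    (∀ h₁ h₂ : X → Y,
      (∀ x x', (∃ g ∈ G, g (h₁ x) ≠ g (h₁ x')) → ∃ f ∈ FX, f x ≠ f x') →
      (∀ x x', (∃ g ∈ G, g (h₂ x) ≠ g (h₂ x')) → ∃ f ∈ FX, f x ≠ f x') →
      (∀ x, eqY (h₁ x) (h x)) → (∀ x, eqY (h₂ x) (h x)) →
      ∀ x, eqY (h₁ x) (h₂ x)) :=
  free_completely_separated_universal_general eqX FX hFX eqY eqY_equiv G hG_pres hG_tight h h_pres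
end

section
/- Let (X, =_X; F) be a function space and (Y, =_Y, ≠_Y; G) a completely separated set, and let h : X → Y be an affine map, i.e., h preserves =_X and g ∘ h ∈ F for every g ∈ G. Then h preserves the induced equality =_{(X,F)}: if x =_{(X,F)} x', then h(x) =_Y h(x'). Consequently h defines a map ρh from the Stone–Čech companion ρ_F X := (X, =_{(X,F)}, ≠_{(X,F)}; F) to (Y, =_Y, ≠_Y; G), which is affine, strongly extensional, and is the unique function from ρ_F X to Y agreeing pointwise with h. -/
section AffineMaps

variable {X Y : Type*} {F : Set (X → ℝ)} {G : Set (Y → ℝ)} {h : X → Y}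

theorem rel_map_of_forall_eq_of_affine {eqY : Y → Y → Prop}
    (hG_tight : ∀ y y', (∀ g ∈ G, g y = g y') → eqY y y')
    (h_affine : ∀ g ∈ G, (fun x => g (h x)) ∈ F) {x x' : X} (hxx' : ∀ f ∈ F, f x = f x') :
    eqY (h x) (h x') :=
  hG_tight _ _ fun g hg => hxx' _ (h_affine g hg)

theorem exists_ne_of_exists_map_ne_of_affine (h_affine : ∀ g ∈ G, (fun x => g (h x)) ∈ F)
    {x x' : X} (hne : ∃ g ∈ G, g (h x) ≠ g (h x')) : ∃ f ∈ F, f x ≠ f x' :=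
  let ⟨g, hg, hgne⟩ := hne
  ⟨_, h_affine g hg, hgne⟩

end AffineMaps

theorem stoneCech_factorization_general {X Y : Type*}
    (F : Set (X → ℝ))
    (eqY : Y → Y → Prop) (eqY_equiv : Equivalence eqY)
    (G : Set (Y → ℝ))
    (hG_tight : ∀ y y', (∀ g ∈ G, g y = g y') → eqY y y')
    (h : X → Y)
    (h_affine : ∀ g ∈ G, (fun x => g (h x)) ∈ F) :
    -- h preserves the induced equality =_{(X,F)}
    (∀ x x', (∀ f ∈ F, f x = f x') → eqY (h x) (h x')) ∧
    -- h (as ρh) is affine from ρ_F X to (Y; G)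
    (∀ g ∈ G, (fun x => g (h x)) ∈ F) ∧
    -- h (as ρh) is strongly extensional w.r.t. ≠_{(Y,G)} and ≠_{(X,F)}
    (∀ x x', (∃ g ∈ G, g (h x) ≠ g (h x')) → ∃ f ∈ F, f x ≠ f x') ∧
    -- uniqueness: any two maps ρ_F X → Y agreeing pointwise with h agree pointwise
    (∀ h₁ h₂ : X → Y,
      (∀ x, eqY (h₁ x) (h x)) → (∀ x, eqY (h₂ x) (h x)) →
      ∀ x, eqY (h₁ x) (h₂ x)) :=
  ⟨fun _ _ => rel_map_of_forall_eq_of_affine hG_tight h_affine,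
    h_affine,
    fun _ _ => exists_ne_of_exists_map_ne_of_affine h_affine,
    fun _ _ hh₁ hh₂ x => eqY_equiv.trans (hh₁ x) (eqY_equiv.symm (hh₂ x))⟩

/-- Set-theoretic Stone–Čech theorem, part (ii): an affine map h from a
function space (X, =_X; F) to a completely separated set (Y, =_Y, ≠_Y; G) preserves the
induced equality =_{(X,F)}, so it defines a map ρh from ρ_F X := (X, =_{(X,F)},
≠_{(X,F)}; F) to Y, which is affine, strongly extensional, and is the unique map from
ρ_F X to Y agreeing pointwise with h. -/
theorem stoneCech_factorization {X Y : Type*}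
    (eqX : X → X → Prop) (eqX_equiv : Equivalence eqX)
    (F : Set (X → ℝ))
    (hF_pres : ∀ f ∈ F, ∀ x x', eqX x x' → f x = f x')
    (eqY neqY : Y → Y → Prop) (eqY_equiv : Equivalence eqY)
    (G : Set (Y → ℝ))
    (hG_pres : ∀ g ∈ G, ∀ y y', eqY y y' → g y = g y')
    (hneqY : ∀ y y', neqY y y' ↔ ∃ g ∈ G, g y ≠ g y')
    (hG_tight : ∀ y y', (∀ g ∈ G, g y = g y') → eqY y y')
    (h : X → Y)
    (h_pres : ∀ x x', eqX x x' → eqY (h x) (h x'))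
    (h_affine : ∀ g ∈ G, (fun x => g (h x)) ∈ F) :
    -- h preserves the induced equality =_{(X,F)}
    (∀ x x', (∀ f ∈ F, f x = f x') → eqY (h x) (h x')) ∧
    -- h (as ρh) is affine from ρ_F X to (Y; G)
    (∀ g ∈ G, (fun x => g (h x)) ∈ F) ∧
    -- h (as ρh) is strongly extensional w.r.t. ≠_{(Y,G)} and ≠_{(X,F)}
    (∀ x x', (∃ g ∈ G, g (h x) ≠ g (h x')) → ∃ f ∈ F, f x ≠ f x') ∧
    -- uniqueness: any two maps ρ_F X → Y agreeing pointwise with h agree pointwise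
    (∀ h₁ h₂ : X → Y,
      (∀ x, eqY (h₁ x) (h x)) → (∀ x, eqY (h₂ x) (h x)) →
      ∀ x, eqY (h₁ x) (h₂ x)) :=
  stoneCech_factorization_general F eqY eqY_equiv G hG_tight h h_affine
end

section
/- Let (X, =_X; F) be a function space, i.e., F is a set of =_X-preserving real-valued functions on X. Then the following are equivalent: (a) the inequality induced by F is tight, i.e., whenever f(x) = f(x') for every f ∈ F, it follows that x =_X x'; (b) there exists an affine embedding of (X, =_X; F) into the product ℝ^F, i.e., a map e : X → (F → ℝ) such that for every f ∈ F the function x ↦ e(x)(f) belongs to F (affineness: the composite of e with the projection pr_f lies in F), and such that (∀ f ∈ F, e(x)(f) = e(x')(f)) implies x =_X x' (embedding). Moreover, (a) implies that the evaluation map e(x)(f) := f(x) is such an affine embedding, it preserves equalities, and it is strongly extensional with respect to ≠_{(X,F)} and the inequality of ℝ^F (∃ f ∈ F, e(x)(f) ≠ e(x')(f)). -/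
section FunctionSpace

variable {X : Type*} {F : Set (X → ℝ)} {r : X → X → Prop}

theorem tight_of_affine_embedding {e : X → F → ℝ} (he_affine : ∀ f : F, (fun x => e x f) ∈ F)
    (he_emb : ∀ x x', (∀ f : F, e x f = e x' f) → r x x') :
    ∀ x x', (∀ f ∈ F, f x = f x') → r x x' :=
  fun x x' h => he_emb x x' fun f => h _ (he_affine f)

theorem eval_embedding_of_tight (h : ∀ x x', (∀ f ∈ F, f x = f x') → r x x') :
    ∀ x x', (∀ f : F, (f : X → ℝ) x = (f : X → ℝ) x') → r x x' :=
  fun x x' hx => h x x' fun f hf => hx ⟨f, hf⟩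

end FunctionSpace

theorem tychonoff_embedding_general {X : Type*}
    (eqX : X → X → Prop)
    (F : Set (X → ℝ))
    (hF_pres : ∀ f ∈ F, ∀ x x', eqX x x' → f x = f x') :
    -- (a) ↔ (b)
    ((∀ x x', (∀ f ∈ F, f x = f x') → eqX x x') ↔
      (∃ e : X → (F → ℝ),
        -- affine: each composite with a projection pr_f belongs to F
        (∀ f : F, (fun x => e x f) ∈ F) ∧
        -- embedding
        (∀ x x', (∀ f : F, e x f = e x' f) → eqX x x'))) ∧
    -- moreover, under (a) the evaluation map is such an affine embedding,
    -- preserves equalities, and is strongly extensional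
    ((∀ x x', (∀ f ∈ F, f x = f x') → eqX x x') →
      ((∀ f : F, (fun x => (f : X → ℝ) x) ∈ F) ∧
       (∀ x x', (∀ f : F, (f : X → ℝ) x = (f : X → ℝ) x') → eqX x x') ∧
       (∀ x x', eqX x x' → ∀ f : F, (f : X → ℝ) x = (f : X → ℝ) x') ∧
       (∀ x x', (∃ f : F, (f : X → ℝ) x ≠ (f : X → ℝ) x') → ∃ f ∈ F, f x ≠ f x'))) := by
  have eval_affine : ∀ f : F, (fun x => (f : X → ℝ) x) ∈ F := fun f => f.2
  refine ⟨⟨fun htight => ?_, fun ⟨_, he_affine, he_emb⟩ => ?_⟩, fun htight => ?_⟩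
  · exact ⟨fun x f => (f : X → ℝ) x, eval_affine, eval_embedding_of_tight htight⟩
  · exact tight_of_affine_embedding he_affine he_emb
  · refine ⟨eval_affine, eval_embedding_of_tight htight,
      fun x x' hxx' f => hF_pres f f.2 x x' hxx', ?_⟩
    rintro x x' ⟨f, hf⟩
    exact ⟨f, f.2, hf⟩

/-- Set-theoretic Tychonoff embedding theorem: for a function space
(X, =_X; F), the inequality induced by F is tight if and only if there is an affine
embedding of (X, =_X; F) into ℝ^F; moreover, tightness implies that the evaluation map
e(x)(f) := f(x) is such an affine embedding, preserves equalities, and is strongly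
extensional. -/
theorem tychonoff_embedding {X : Type*}
    (eqX : X → X → Prop) (eqX_equiv : Equivalence eqX)
    (F : Set (X → ℝ))
    (hF_pres : ∀ f ∈ F, ∀ x x', eqX x x' → f x = f x') :
    -- (a) ↔ (b)
    ((∀ x x', (∀ f ∈ F, f x = f x') → eqX x x') ↔
      (∃ e : X → (F → ℝ),
        -- affine: each composite with a projection pr_f belongs to F
        (∀ f : F, (fun x => e x f) ∈ F) ∧
        -- embedding
        (∀ x x', (∀ f : F, e x f = e x' f) → eqX x x'))) ∧
    -- moreover, under (a) the evaluation map is such an affine embedding,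
    -- preserves equalities, and is strongly extensional
    ((∀ x x', (∀ f ∈ F, f x = f x') → eqX x x') →
      ((∀ f : F, (fun x => (f : X → ℝ) x) ∈ F) ∧
       (∀ x x', (∀ f : F, (f : X → ℝ) x = (f : X → ℝ) x') → eqX x x') ∧
       (∀ x x', eqX x x' → ∀ f : F, (f : X → ℝ) x = (f : X → ℝ) x') ∧
       (∀ x x', (∃ f : F, (f : X → ℝ) x ≠ (f : X → ℝ) x') → ∃ f ∈ F, f x ≠ f x'))) :=
  tychonoff_embedding_general eqX F hF_pres
end
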